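/- (Herbrand's theorem for purely existential sentences.) Let L be a first-order language possessing at least one constant symbol, and let A(α) be a quantifier-free L-formula whose atoms are all relational (no equality atoms) and whose only free variable is α. If the sentence ∃α A(α) is true in every nonempty L-structure, then there exist finitely many closed L-terms m₁,…,mₖ such that the Herbrand disjunction A(m₁) ∨ … ∨ A(mₖ) is true in every nonempty L-structure. -/

import Mathlib

open FirstOrder Language

universe u v

/-- Quantifier-free formulas: built from atomic relational formulas and `⊥` using
the propositional connectives `⊓`, `⊔`, `→`(imp) and `¬`(not) only (no equality
atoms, no quantifiers). -/
inductive IsQFProp {L : FirstOrder.Language} {α : Type*} :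
    ∀ {n : ℕ}, L.BoundedFormula α n → Prop
  | falsum {n : ℕ} : IsQFProp (⊥ : L.BoundedFormula α n)
  | rel {n l : ℕ} (R : L.Relations l) (ts : Fin l → L.Term (α ⊕ Fin n)) :
      IsQFProp (BoundedFormula.rel R ts)
  | inf {n : ℕ} {φ ψ : L.BoundedFormula α n} :
      IsQFProp φ → IsQFProp ψ → IsQFProp (φ ⊓ ψ)
  | sup {n : ℕ} {φ ψ : L.BoundedFormula α n} :
      IsQFProp φ → IsQFProp ψ → IsQFProp (φ ⊔ ψ)
  | imp {n : ℕ} {φ ψ : L.BoundedFormula α n} :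
      IsQFProp φ → IsQFProp ψ → IsQFProp (φ.imp ψ)
  | not {n : ℕ} {φ : L.BoundedFormula α n} :
      IsQFProp φ → IsQFProp φ.not

/-- `A(m)`: the sentence obtained from a formula `A` with one free variable by
substituting the closed term `m` for that variable. -/
def instSentence {L : FirstOrder.Language} (A : L.BoundedFormula Empty 1)
    (m : L.Term Empty) : L.Sentence :=
  BoundedFormula.subst A.toFormula (Sum.elim Empty.elim fun _ => m)

/-! Suppose no finite Herbrand disjunction is valid. By compactness the theory
`{¬A(m) | m closed term}` then has a nonempty model `M`. The substructure of `M` generated by `∅`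
consists of the values of closed terms and is nonempty because `L` has a constant, so `∃α A(α)`
holds there at some value of a closed term `m`. Being quantifier-free, `A(m)` then also holds in
`M`, a contradiction. -/

namespace IsQFProp

variable {L : FirstOrder.Language} {α : Type*} {n : ℕ}

theorem isQF {φ : L.BoundedFormula α n} (h : IsQFProp φ) : φ.IsQF := by
  induction h with
  | falsum => exact BoundedFormula.isQF_bot
  | rel R ts => exact (BoundedFormula.IsAtomic.rel R ts).isQF
  | inf _ _ h₁ h₂ => exact h₁.inf h₂
  | sup _ _ h₁ h₂ => exact h₁.sup h₂
  | imp _ _ h₁ h₂ => exact h₁.imp h₂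
  | not _ h => exact h.not

end IsQFProp

section

variable {L : FirstOrder.Language.{u, v}}

theorem realize_instSentence {M : Type*} [L.Structure M] (A : L.BoundedFormula Empty 1)
    (t : L.Term Empty) (v : Empty → M) (xs : Fin 0 → M) :
    M ⊨ instSentence A t ↔ A.Realize v (Fin.snoc xs (t.realize v)) := by
  rw [instSentence, Sentence.Realize, Formula.Realize, BoundedFormula.realize_subst]
  change Formula.Realize _ _ ↔ _
  rw [BoundedFormula.realize_toFormula]
  congr! 1
  funext i
  obtain rfl := Subsingleton.elim i (Fin.last 0)
  simp only [Function.comp_apply, Sum.elim_inr, Fin.snoc_last]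
  exact congrArg (Term.realize · t) (Subsingleton.elim _ _)

theorem exists_term_realize_eq_of_mem_closure_empty {M : Type*} [L.Structure M]
    {x : M} (hx : x ∈ Substructure.closure L (∅ : Set M)) (v : Empty → M) :
    ∃ t : L.Term Empty, t.realize v = x := by
  obtain ⟨t, rfl⟩ := Substructure.mem_closure_iff_exists_term.1 hx
  refine ⟨t.relabel fun a => (Set.notMem_empty _ a.2).elim, ?_⟩
  rw [Term.realize_relabel]
  congr
  exact Subsingleton.elim _ _

theorem exists_realize_instSentence_of_closure_empty_realize_ex {M : Type*} [L.Structure M]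
    {A : L.BoundedFormula Empty 1} (hA : A.IsQF)
    (h : Substructure.closure L (∅ : Set M) ⊨ A.ex) :
    ∃ t : L.Term Empty, M ⊨ instSentence A t := by
  set S := Substructure.closure L (∅ : Set M)
  obtain ⟨a, ha⟩ := BoundedFormula.realize_ex.1 h
  obtain ⟨t, ht⟩ := exists_term_realize_eq_of_mem_closure_empty a.2 (S.subtype ∘ default)
  refine ⟨t, (realize_instSentence A t (S.subtype ∘ default) (S.subtype ∘ default)).2 ?_⟩
  rw [ht, ← Substructure.subtype_apply, ← Fin.comp_snoc]
  exact (hA.realize_embedding S.subtype).2 ha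

theorem exists_finset_forall_realize_of_forall_exists_realize {ι : Type*}
    (φ : ι → L.Sentence)
    (h : ∀ (M : Type max u v) [L.Structure M], Nonempty M → ∃ i, M ⊨ φ i) :
    ∃ s : Finset ι, ∀ (M : Type max u v) [L.Structure M], Nonempty M → ∃ i ∈ s, M ⊨ φ i := by
  classical
  set T : L.Theory := Set.range fun i => (φ i).not with hT_def
  have hT : ¬ T.IsSatisfiable := by
    rintro ⟨M⟩
    obtain ⟨i, hi⟩ := h M M.nonempty'
    exact (Theory.realize_sentence_of_mem T ⟨i, rfl⟩ : M ⊨ (φ i).not) hi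
  rw [Theory.isSatisfiable_iff_isFinitelySatisfiable, Theory.IsFinitelySatisfiable] at hT
  push Not at hT
  obtain ⟨T₀, hT₀, hunsat⟩ := hT
  rw [hT_def, ← Set.image_univ, Finset.subset_set_image_iff] at hT₀
  obtain ⟨s, -, rfl⟩ := hT₀
  refine ⟨s, fun M _ hM => ?_⟩
  by_contra! hfalse
  refine hunsat (@Theory.Model.isSatisfiable _ _ M hM _ ⟨?_⟩)
  simp only [Finset.coe_image, Set.forall_mem_image]
  exact fun i hi => (Sentence.realize_not M).2 (hfalse i hi)

end

/-- **Herbrand's theorem for purely existential sentences.**  If `L` has a constant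
symbol and `A(α)` is a quantifier-free formula with only relational atoms whose only
free variable is `α`, and the sentence `∃α A(α)` is true in every nonempty
`L`-structure, then there are finitely many closed terms `m₁,…,mₖ` (`k ≥ 1`) such
that the Herbrand disjunction `A(m₁) ∨ … ∨ A(mₖ)` is true in every nonempty
`L`-structure. -/
theorem herbrand_exists {L : FirstOrder.Language.{u, v}} [Nonempty L.Constants]
    (A : L.BoundedFormula Empty 1) (hA : IsQFProp A)
    (hval : ∀ (M : Type max u v) [L.Structure M], Nonempty M → M ⊨ A.ex) :
    ∃ ms : List (L.Term Empty), ms ≠ [] ∧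
      ∀ (M : Type max u v) [L.Structure M], Nonempty M →
        M ⊨ ((ms.map fun m => instSentence A m).foldr (· ⊔ ·) ⊥) := by
  obtain ⟨c⟩ := ‹Nonempty L.Constants›
  obtain ⟨s, hs⟩ := exists_finset_forall_realize_of_forall_exists_realize (instSentence A)
    fun M _ _ => exists_realize_instSentence_of_closure_empty_realize_ex hA.isQF
      (hval _ ⟨⟨c.term.realize (default : Empty → M), Term.realize_mem _ _ isEmptyElim⟩⟩)
  refine ⟨c.term :: s.toList, List.cons_ne_nil _ _, fun M _ hM => ?_⟩
  obtain ⟨t, ht, hMt⟩ := hs M hM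
  refine (BoundedFormula.realize_foldr_sup _ _ _).2 ⟨instSentence A t, ?_, hMt⟩
  exact List.mem_map_of_mem (List.mem_cons_of_mem _ (Finset.mem_toList.2 ht))
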